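/- For a monoid S the following are equivalent: (i) for every set X with at least two elements the cofree act X^S is decomposable; (ii) there exists a set X with at least two elements such that X^S is decomposable; (iii) S is left reversible. -/
import Mathlib


universe u

/-- A right `S`-act structure on a nonempty type `A`: a right action of the monoid `S`. -/
class RightAct (S : Type u) [Monoid S] (A : Type u) : Type u where
  act : A → S → A
  act_one : ∀ a : A, act a 1 = a
  act_mul : ∀ (a : A) (s t : S), act (act a s) t = act a (s * t)
  nonempty : Nonempty A

infixl:70 " ⊛ " => RightAct.act

/-- `S` is left reversible: every two right ideals (equiv. principal ones) intersect. -/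
def LeftReversible (S : Type u) [Monoid S] : Prop :=
  ∀ a b : S, ∃ u v : S, a * u = b * v

/-- A left zero element of the monoid `S`. -/
def IsLeftZero (S : Type u) [Monoid S] (z : S) : Prop :=
  ∀ s : S, z * s = z

/-- `f : A → B` is a homomorphism of right `S`-acts. -/
def IsActHom (S : Type u) [Monoid S] {A B : Type u} [RightAct S A] [RightAct S B]
    (f : A → B) : Prop :=
  ∀ (a : A) (s : S), f (a ⊛ s) = f a ⊛ s

/-- The restriction of `f : A → B` to the subset `C` is a homomorphism of right `S`-acts. -/
def IsActHomOn (S : Type u) [Monoid S] {A B : Type u} [RightAct S A] [RightAct S B]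
    (f : A → B) (C : Set A) : Prop :=
  ∀ a ∈ C, ∀ s : S, f (a ⊛ s) = f a ⊛ s

/-- A subact: a nonempty subset closed under the action. -/
def IsSubact (S : Type u) [Monoid S] {A : Type u} [RightAct S A] (C : Set A) : Prop :=
  C.Nonempty ∧ ∀ a ∈ C, ∀ s : S, a ⊛ s ∈ C

/-- A zero element of an act: fixed by the action of every `s ∈ S`. -/
def IsZeroElem (S : Type u) [Monoid S] {A : Type u} [RightAct S A] (θ : A) : Prop :=
  ∀ s : S, θ ⊛ s = θ

/-- A subset `D` (viewed as an act) is decomposable: it is the disjoint union of two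
nonempty subacts. -/
def DecomposableSet (S : Type u) [Monoid S] {A : Type u} [RightAct S A] (D : Set A) : Prop :=
  ∃ B C : Set A, IsSubact S B ∧ IsSubact S C ∧ B ∪ C = D ∧ B ∩ C = ∅

/-- A subset (viewed as an act) is indecomposable. -/
def IndecomposableSet (S : Type u) [Monoid S] {A : Type u} [RightAct S A] (D : Set A) : Prop :=
  ¬ DecomposableSet S D

/-- The act `A` is decomposable. -/
def Decomposable (S : Type u) [Monoid S] (A : Type u) [RightAct S A] : Prop :=
  DecomposableSet S (Set.univ : Set A)

/-- The act `A` is indecomposable. -/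
def Indecomposable (S : Type u) [Monoid S] (A : Type u) [RightAct S A] : Prop :=
  ¬ Decomposable S A

/-- A cyclic act: generated by a single element. -/
def CyclicAct (S : Type u) [Monoid S] (A : Type u) [RightAct S A] : Prop :=
  ∃ a : A, ∀ x : A, ∃ s : S, x = a ⊛ s

/-- `A` is a retract of `B`. -/
def IsRetractOf (S : Type u) [Monoid S] (A B : Type u) [RightAct S A] [RightAct S B] : Prop :=
  ∃ (i : A → B) (p : B → A), IsActHom S i ∧ IsActHom S p ∧ ∀ a : A, p (i a) = a

/-- `Q` is an injective act: every homomorphism from a subact `C` of any act `B` into `Q`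
extends to `B`. -/
def ActInjective (S : Type u) [Monoid S] (Q : Type u) [RightAct S Q] : Prop :=
  ∀ (B : Type u) [RightAct S B], ∀ C : Set B, IsSubact S C →
    ∀ f : B → Q, IsActHomOn S f C →
      ∃ g : B → Q, IsActHom S g ∧ Set.EqOn g f C

/-- `Q` is InC-injective: injective relative to all embeddings into indecomposable acts. -/
def InCInjective (S : Type u) [Monoid S] (Q : Type u) [RightAct S Q] : Prop :=
  ∀ (B : Type u) [RightAct S B], Indecomposable S B → ∀ C : Set B, IsSubact S C →
    ∀ f : B → Q, IsActHomOn S f C →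
      ∃ g : B → Q, IsActHom S g ∧ Set.EqOn g f C

/-- `Q` is InD-injective: injective relative to all embeddings of indecomposable acts. -/
def InDInjective (S : Type u) [Monoid S] (Q : Type u) [RightAct S Q] : Prop :=
  ∀ (B : Type u) [RightAct S B], ∀ C : Set B, IsSubact S C → IndecomposableSet S C →
    ∀ f : B → Q, IsActHomOn S f C →
      ∃ g : B → Q, IsActHom S g ∧ Set.EqOn g f C

/-- `Q` is PInD-injective: every monomorphism from an indecomposable subact extends. -/
def PInDInjective (S : Type u) [Monoid S] (Q : Type u) [RightAct S Q] : Prop :=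
  ∀ (B : Type u) [RightAct S B], ∀ C : Set B, IsSubact S C → IndecomposableSet S C →
    ∀ f : B → Q, IsActHomOn S f C → Set.InjOn f C →
      ∃ g : B → Q, IsActHom S g ∧ Set.EqOn g f C

/-- `A` is quasi injective: homomorphisms from subacts of `A` to `A` extend to `A`. -/
def QuasiInjective (S : Type u) [Monoid S] (A : Type u) [RightAct S A] : Prop :=
  ∀ C : Set A, IsSubact S C → ∀ f : A → A, IsActHomOn S f C →
    ∃ g : A → A, IsActHom S g ∧ Set.EqOn g f C

/-- `A` is pseudo injective: monomorphisms from subacts of any act into `A` extend. -/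
def PseudoInjective (S : Type u) [Monoid S] (A : Type u) [RightAct S A] : Prop :=
  ∀ (C : Type u) [RightAct S C], ∀ B : Set C, IsSubact S B →
    ∀ f : C → A, IsActHomOn S f B → Set.InjOn f B →
      ∃ g : C → A, IsActHom S g ∧ Set.EqOn g f B

/-- A subact `Q` of `A` (viewed as an act in its own right) is injective. -/
def ActInjectiveSet (S : Type u) [Monoid S] {A : Type u} [RightAct S A] (Q : Set A) : Prop :=
  ∀ (B : Type u) [RightAct S B], ∀ C : Set B, IsSubact S C →
    ∀ f : B → A, IsActHomOn S f C → (∀ c ∈ C, f c ∈ Q) →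
      ∃ g : B → A, IsActHom S g ∧ (∀ b : B, g b ∈ Q) ∧ Set.EqOn g f C

/-- A subact `Q` of `A` (viewed as an act in its own right) is InD-injective. -/
def InDInjectiveSet (S : Type u) [Monoid S] {A : Type u} [RightAct S A] (Q : Set A) : Prop :=
  ∀ (B : Type u) [RightAct S B], ∀ C : Set B, IsSubact S C → IndecomposableSet S C →
    ∀ f : B → A, IsActHomOn S f C → (∀ c ∈ C, f c ∈ Q) →
      ∃ g : B → A, IsActHom S g ∧ (∀ b : B, g b ∈ Q) ∧ Set.EqOn g f C

/-- A subact `Q` of `A` (viewed as an act in its own right) is PInD-injective. -/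
def PInDInjectiveSet (S : Type u) [Monoid S] {A : Type u} [RightAct S A] (Q : Set A) : Prop :=
  ∀ (B : Type u) [RightAct S B], ∀ C : Set B, IsSubact S C → IndecomposableSet S C →
    ∀ f : B → A, IsActHomOn S f C → Set.InjOn f C → (∀ c ∈ C, f c ∈ Q) →
      ∃ g : B → A, IsActHom S g ∧ (∀ b : B, g b ∈ Q) ∧ Set.EqOn g f C

/-- The monoid `S` as a right act over itself, by multiplication. -/
instance selfAct (S : Type u) [Monoid S] : RightAct S S where
  act a s := a * s
  act_one := mul_one
  act_mul a s t := mul_assoc a s t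
  nonempty := ⟨1⟩

/-- `Q` is weakly injective: homomorphisms from right ideals of `S` into `Q` extend to `S`. -/
def WeaklyInjective (S : Type u) [Monoid S] (Q : Type u) [RightAct S Q] : Prop :=
  ∀ I : Set S, IsSubact S I → ∀ f : S → Q, IsActHomOn S f I →
    ∃ g : S → Q, IsActHom S g ∧ Set.EqOn g f I

/-- The relation whose equivalence closure has the indecomposable components as classes. -/
def ActRel (S : Type u) [Monoid S] {A : Type u} [RightAct S A] (a b : A) : Prop :=
  ∃ s : S, b = a ⊛ s

/-- The indecomposable component of the element `a` of an act. -/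
def ActComponent (S : Type u) [Monoid S] {A : Type u} [RightAct S A] (a : A) : Set A :=
  {b | Relation.EqvGen (ActRel S) a b}

/-- The cofree act `X^S`: all functions `S → X` with `(f ⊛ s) t = f (s * t)`. -/
instance cofreeAct (S : Type u) [Monoid S] (X : Type u) [Nonempty X] :
    RightAct S (S → X) where
  act f s := fun t => f (s * t)
  act_one f := by funext t; show f (1 * t) = f t; rw [one_mul]
  act_mul f s t := by funext r; show f (s * (t * r)) = f (s * t * r); rw [mul_assoc]
  nonempty := ⟨fun _ => Classical.arbitrary X⟩

theorem cofree_act_eq {S : Type u} [inst : Monoid S] {X : Type u} [Nonempty X]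
    (f g : S → X) (s : S) (hfg : ∀ t, f (s * t) = g (s * t)) :
    @RightAct.act S inst (S → X) (cofreeAct S X) f s
      = @RightAct.act S inst (S → X) (cofreeAct S X) g s := funext hfg

/-- TFAE: (i) for every set `X` with at least two elements the cofree act
`X^S` is decomposable; (ii) some such cofree act is decomposable; (iii) `S` is left
reversible. -/
theorem cofree_decomposable_tfae (S : Type u) [Monoid S] :
    List.TFAE [
      ∀ (X : Type u) [Nontrivial X], Decomposable S (S → X),
      ∃ (X : Type u) (_ : Nontrivial X), Decomposable S (S → X),
      LeftReversible S ] := by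
  tfae_have 1 → 2 := fun h => ⟨ULift Bool, inferInstance, h _⟩
  tfae_have 2 → 3 := by
    rintro ⟨X, hX, B, C, hB, hC, hUnion, hDisj⟩ a b
    haveI : Nontrivial X := hX
    by_contra hcon
    push_neg at hcon
    obtain ⟨f, hf⟩ := hB.1
    obtain ⟨g, hg⟩ := hC.1
    classical
    set h : S → X := fun t => if ∃ u, t = b * u then g t else f t with hdef
    have hha := cofree_act_eq h f a (fun t => by
      have hn : ¬ ∃ u, a * t = b * u := by
        rintro ⟨u, hu⟩; exact hcon t u hu
      simp [hdef, hn])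
    have hhb := cofree_act_eq h g b (fun t => by
      have hp : ∃ u, b * t = b * u := ⟨t, rfl⟩
      simp [hdef, hp])
    have hmem : h ∈ B ∪ C := by rw [hUnion]; trivial
    rcases hmem with hmB | hmC
    · have h1 := hB.2 h hmB b
      have h2 := hC.2 g hg b
      rw [hhb] at h1
      have : g ⊛ b ∈ B ∩ C := ⟨h1, h2⟩
      rw [hDisj] at this; exact this
    · have h1 := hC.2 h hmC a
      have h2 := hB.2 f hf a
      rw [hha] at h1
      have : f ⊛ a ∈ B ∩ C := ⟨h2, h1⟩
      rw [hDisj] at this; exact this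
  tfae_have 3 → 1 := by
    intro hrev X hX
    haveI : Nontrivial X := hX
    obtain ⟨x₀, x₁, hne⟩ := exists_pair_ne X
    classical
    set B : Set (S → X) := {f | ∃ s : S, ∀ t : S, f (s * t) = x₀} with hBdef
    refine ⟨B, Bᶜ, ⟨⟨fun _ => x₀, ⟨1, fun _ => rfl⟩⟩, ?_⟩,
      ⟨⟨fun _ => x₁, ?_⟩, ?_⟩, Set.union_compl_self B, Set.inter_compl_self B⟩
    · rintro f ⟨s, hs⟩ r
      obtain ⟨u, v, huv⟩ := hrev s r
      refine ⟨v, fun t => ?_⟩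
      show f (r * (v * t)) = x₀
      rw [← mul_assoc, ← huv, mul_assoc]
      exact hs (u * t)
    · rintro ⟨s, hs⟩
      exact hne.symm (hs 1)
    · rintro f hf r ⟨s, hs⟩
      refine hf ⟨r * s, fun t => ?_⟩
      rw [mul_assoc]
      exact hs t
  tfae_finish
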